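/- arXiv:2008.08740 — 2 statements merged into one kernel-verified Lean document; each statement's English description precedes it below -/
import Mathlib

section
/- Let χ be a chi-squared random variable with d degrees of freedom. Then for all x > 1, P[χ ≤ d/x] ≤ exp(-(d/2)(ln x + 1/x - 1)). -/
open MeasureTheory ProbabilityTheory Real

/-- The chi-squared distribution with `d` degrees of freedom, as a Gamma
distribution with shape `d/2` and rate `1/2`. -/
noncomputable def chiSqMeasure (d : ℕ) : Measure ℝ :=
  gammaMeasure ((d : ℝ) / 2) (1 / 2)

/-!
Chernoff's method by a change of measure. Changing the rate of a Gamma density from `r` to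
`r' ≥ r` multiplies it by `(r' / r) ^ a * exp (-(r' - r) y)`, which on `y ≤ s` is at least
`(r' / r) ^ a * exp (-(r' - r) s)`. Hence `Γ(a, r)(Iic s) ≤ (r / r') ^ a * exp ((r' - r) s)`
because `Γ(a, r')` has mass one. For `χ²(d) = Γ(d/2, 1/2)` and `s = d / x`, the optimal choice
`r' = x / 2` gives the stated bound.
-/

theorem gammaPDFReal_eq_mul_gammaPDFReal (a : ℝ) {r r' : ℝ} (hr : 0 < r) (hr' : 0 < r')
    (y : ℝ) :
    gammaPDFReal a r y = (r / r') ^ a * exp ((r' - r) * y) * gammaPDFReal a r' y := by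
  unfold gammaPDFReal
  split_ifs with hy
  · have hexp : exp (-(r * y)) = exp ((r' - r) * y) * exp (-(r' * y)) := by
      rw [← exp_add]; ring_nf
    have hr'a : r' ^ a ≠ 0 := (rpow_pos_of_pos hr' a).ne'
    rw [div_rpow hr.le hr'.le, hexp]
    field_simp
  · simp

theorem gammaPDF_le_mul_gammaPDF {a r r' s y : ℝ} (ha : 0 < a) (hr : 0 < r) (hrr' : r ≤ r')
    (hy : y ≤ s) :
    gammaPDF a r y ≤ ENNReal.ofReal ((r / r') ^ a * exp ((r' - r) * s)) * gammaPDF a r' y := by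
  have hr' : 0 < r' := hr.trans_le hrr'
  rw [gammaPDF, gammaPDF, ← ENNReal.ofReal_mul (by positivity),
    gammaPDFReal_eq_mul_gammaPDFReal a hr hr' y]
  refine ENNReal.ofReal_le_ofReal (mul_le_mul_of_nonneg_right ?_ (gammaPDFReal_nonneg ha hr' y))
  gcongr

theorem gammaMeasure_Iic_le {a r r' : ℝ} (ha : 0 < a) (hr : 0 < r) (hrr' : r ≤ r') (s : ℝ) :
    gammaMeasure a r (Set.Iic s) ≤ ENNReal.ofReal ((r / r') ^ a * exp ((r' - r) * s)) := by
  set C := ENNReal.ofReal ((r / r') ^ a * exp ((r' - r) * s))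
  have hmeas : Measurable (gammaPDF a r') := (measurable_gammaPDFReal a r').ennreal_ofReal
  calc gammaMeasure a r (Set.Iic s)
      = ∫⁻ y in Set.Iic s, gammaPDF a r y := withDensity_apply _ measurableSet_Iic
    _ ≤ ∫⁻ y in Set.Iic s, C * gammaPDF a r' y :=
        setLIntegral_mono (hmeas.const_mul C) fun y hy => gammaPDF_le_mul_gammaPDF ha hr hrr' hy
    _ ≤ ∫⁻ y, C * gammaPDF a r' y := setLIntegral_le_lintegral _ _
    _ = C := by
        rw [lintegral_const_mul _ hmeas,
          lintegral_gammaPDF_eq_one ha (hr.trans_le hrr'), mul_one]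

/-- Lower-tail bound for chi-squared: if `χ ~ χ²(d)`, then for all `x > 1`,
`P[χ ≤ d/x] ≤ exp(-(d/2)(ln x + 1/x - 1))`. -/
theorem stmt3 (d : ℕ) (hd : 0 < d) (x : ℝ) (hx : 1 < x) :
    chiSqMeasure d {y : ℝ | y ≤ (d : ℝ) / x}
      ≤ ENNReal.ofReal (Real.exp (-((d : ℝ) / 2) * (Real.log x + 1 / x - 1))) := by
  have hx0 : 0 < x := one_pos.trans hx
  refine (gammaMeasure_Iic_le (r' := x / 2) (by positivity) one_half_pos (by linarith) _).trans_eq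
    ?_
  congr 1
  rw [rpow_def_of_pos (by positivity), ← exp_add]
  congr 1
  rw [show (1 / 2 : ℝ) / (x / 2) = x⁻¹ by field_simp, log_inv]
  field_simp
  ring
end

section
/- The function f(x) = (1 + c)(1 + x) - sqrt(1 + c(1 + x)) · sqrt(1 + 2x + c(1 + x)) is strictly positive and monotonically increasing in x for all x > 0, for any fixed constant c > 0. -/
open Real Set

/-!
With `k = 1 + c`, the two radicands are `m - x` and `m + x` for `m = k (1 + x)`, so
`f x = m - √(m ^ 2 - x ^ 2) = (1 + x) (k - √(k ^ 2 - t ^ 2))` with `t = x / (1 + x) ∈ (0, 1)`.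
Both factors are positive and strictly increasing in `x`.
-/

lemma sub_sqrt_sq_sub_sq_pos {k t : ℝ} (hk : 0 < k) (ht : t ≠ 0) :
    0 < k - √(k ^ 2 - t ^ 2) :=
  sub_pos.2 <| (sqrt_lt' hk).2 <| sub_lt_self _ (sq_pos_iff.2 ht)

lemma strictMonoOn_sub_sqrt_sq_sub_sq (k : ℝ) :
    StrictMonoOn (fun t ↦ k - √(k ^ 2 - t ^ 2)) (Icc 0 k) := by
  intro s hs t ht hst
  have hsq : s ^ 2 < t ^ 2 := pow_lt_pow_left₀ hst hs.1 two_ne_zero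
  have ht_le : t ^ 2 ≤ k ^ 2 := pow_le_pow_left₀ ht.1 ht.2 2
  have : √(k ^ 2 - t ^ 2) < √(k ^ 2 - s ^ 2) :=
    sqrt_lt_sqrt (sub_nonneg.2 ht_le) (sub_lt_sub_left hsq _)
  simp only
  linarith

lemma strictMonoOn_div_one_add : StrictMonoOn (fun x : ℝ ↦ x / (1 + x)) (Ici 0) := by
  intro x (hx : 0 ≤ x) y (hy : 0 ≤ y) hxy
  simp only
  rw [div_lt_div_iff₀ (by linarith) (by linarith)]
  linarith

lemma div_one_add_mem_Icc {x k : ℝ} (hx : 0 ≤ x) (hk : 1 ≤ k) : x / (1 + x) ∈ Icc 0 k :=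
  ⟨by positivity, ((div_le_one (by linarith)).2 (by linarith)).trans hk⟩

lemma sqrt_mul_sqrt_eq_mul_sqrt {c x : ℝ} (hc : 0 ≤ c) (hx : 0 ≤ x) :
    √(1 + c * (1 + x)) * √(1 + 2 * x + c * (1 + x)) =
      (1 + x) * √((1 + c) ^ 2 - (x / (1 + x)) ^ 2) := by
  have hx₁ : 0 < 1 + x := by linarith
  rw [← sqrt_mul (by positivity), ← sqrt_sq hx₁.le, ← sqrt_mul (sq_nonneg _), sqrt_sq hx₁.le]
  congr 1
  field_simp
  ring

/-- The exponent function `f(x) = (1+c)(1+x) - √(1+c(1+x))·√(1+2x+c(1+x))`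
is strictly positive and strictly increasing on `x > 0`, for any fixed `c > 0`. -/
theorem stmt5 (c : ℝ) (hc : 0 < c) :
    (∀ x > 0, 0 < (1 + c) * (1 + x) -
        Real.sqrt (1 + c * (1 + x)) * Real.sqrt (1 + 2*x + c * (1 + x))) ∧
    StrictMonoOn (fun x : ℝ => (1 + c) * (1 + x) -
        Real.sqrt (1 + c * (1 + x)) * Real.sqrt (1 + 2*x + c * (1 + x)))
      (Set.Ioi 0) := by
  have hf : ∀ x > (0 : ℝ), (1 + c) * (1 + x) -
      √(1 + c * (1 + x)) * √(1 + 2 * x + c * (1 + x)) =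
        (1 + x) * ((1 + c) - √((1 + c) ^ 2 - (x / (1 + x)) ^ 2)) := by
    intro x hx
    rw [sqrt_mul_sqrt_eq_mul_sqrt hc.le hx.le]
    ring
  have hpos : ∀ x > (0 : ℝ), 0 < (1 + c) - √((1 + c) ^ 2 - (x / (1 + x)) ^ 2) :=
    fun x hx ↦ sub_sqrt_sq_sub_sq_pos (by linarith) (by positivity)
  refine ⟨fun x hx ↦ hf x hx ▸ mul_pos (by linarith) (hpos x hx), ?_⟩
  intro x (hx : 0 < x) y (hy : 0 < y) hxy
  simp only
  rw [hf x hx, hf y hy]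
  have hk : 1 ≤ 1 + c := by linarith
  refine mul_lt_mul'' (by linarith) ?_ (by linarith) (hpos x hx).le
  exact strictMonoOn_sub_sqrt_sq_sub_sq (1 + c) (div_one_add_mem_Icc hx.le hk)
    (div_one_add_mem_Icc hy.le hk) (strictMonoOn_div_one_add hx.le hy.le hxy)
end
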